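/- The sum of all entries of the inverse of the exponential distance matrix of K_{s,t}, for q ≠ ±1 and q²(s−1)(t−1) ≠ 1, equals (2q(q−1)st − (s+t)(q²−1)) / ((q²−1)(q²(s−1)(t−1) − 1)). -/

import Mathlib

/-!
Write `A` for the matrix and `𝟙` for the all-ones vector. If `A` is invertible and `A x = 𝟙`,
the entry sum of `A⁻¹` is `𝟙ᵀ A⁻¹ 𝟙 = ∑ᵢ xᵢ`. Off the diagonal, the entries of `A` depend only on
the sides of the two vertices, so `A x` on one side is `(1 - q²)` times `x` plus a combination
of the two side sums `a, b` of `x`. Hence `A x = 𝟙` has a solution constant on each side, and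
`A x = 0` forces `a, b` to solve a `2 × 2` system of determinant `(1 - q²)(1 - q²(s-1)(t-1))`,
so `a = b = 0` and then `x = 0`.
-/

/-- The exponential distance matrix of a connected graph `G`:
the `(u,v)` entry is `q ^ d(u,v)`. -/
noncomputable def expDistMatrix {V : Type*} (G : SimpleGraph V) (q : ℝ) : Matrix V V ℝ :=
  Matrix.of fun u v => q ^ (G.dist u v)

open Finset Matrix

namespace SimpleGraph

variable {V W : Type*} {G : SimpleGraph V}

lemma dist_eq_two_of_mem_commonNeighbors {u v w : V} (hne : u ≠ v) (hnadj : ¬G.Adj u v)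
    (hw : w ∈ G.commonNeighbors u v) : G.dist u v = 2 := by
  rw [dist, edist_eq_two_iff.mpr ⟨hne, hnadj, w, hw⟩]
  rfl

lemma completeBipartiteGraph_dist_inl_inr (v : V) (w : W) :
    (completeBipartiteGraph V W).dist (.inl v) (.inr w) = 1 :=
  dist_eq_one_iff_adj.mpr (by simp)

lemma completeBipartiteGraph_dist_inr_inl (w : W) (v : V) :
    (completeBipartiteGraph V W).dist (.inr w) (.inl v) = 1 :=
  dist_eq_one_iff_adj.mpr (by simp)

lemma completeBipartiteGraph_dist_inl_inl [Nonempty W] {v v' : V} (h : v ≠ v') :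
    (completeBipartiteGraph V W).dist (.inl v) (.inl v') = 2 :=
  dist_eq_two_of_mem_commonNeighbors (by simpa) (by simp)
    (w := .inr (Classical.arbitrary W)) (by simp [mem_commonNeighbors])

lemma completeBipartiteGraph_dist_inr_inr [Nonempty V] {w w' : W} (h : w ≠ w') :
    (completeBipartiteGraph V W).dist (.inr w) (.inr w') = 2 :=
  dist_eq_two_of_mem_commonNeighbors (by simpa) (by simp)
    (w := .inl (Classical.arbitrary V)) (by simp [mem_commonNeighbors])

end SimpleGraph

lemma Fintype.sum_ite_eq_mul {ι R : Type*} [Fintype ι] [DecidableEq ι] [CommRing R] (i : ι)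
    (r : R) (x : ι → R) :
    ∑ j, (if i = j then 1 else r) * x j = (1 - r) * x i + r * ∑ j, x j := by
  have h (j : ι) :
      (if i = j then 1 else r) * x j = (1 - r) * (if i = j then x j else 0) + r * x j := by
    split_ifs <;> ring
  simp only [h, sum_add_distrib, ← mul_sum, sum_ite_eq]

lemma Matrix.sum_inv_apply_eq_sum_of_mulVec_eq_one {ι K : Type*} [Fintype ι] [DecidableEq ι]
    [CommRing K] {A : Matrix ι ι K} (hA : IsUnit A) {x : ι → K} (hx : A *ᵥ x = 1) :
    ∑ i, ∑ j, A⁻¹ i j = ∑ i, x i := by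
  have : A⁻¹ *ᵥ 1 = x := by
    rw [← hx, mulVec_mulVec, nonsing_inv_mul _ ((isUnit_iff_isUnit_det A).mp hA), one_mulVec]
  simp [← this, mulVec, dotProduct]

section CompleteBipartite

variable {V W : Type*} [Fintype V] [Fintype W]

lemma expDistMatrix_completeBipartiteGraph_mulVec_inl [DecidableEq V] [Nonempty W] (q : ℝ)
    (x : V ⊕ W → ℝ) (i : V) :
    (expDistMatrix (completeBipartiteGraph V W) q *ᵥ x) (.inl i) =
      (1 - q ^ 2) * x (.inl i) + q ^ 2 * ∑ j, x (.inl j) + q * ∑ j, x (.inr j) := by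
  have hdist (j : V) : q ^ (completeBipartiteGraph V W).dist (.inl i) (.inl j) =
      if i = j then 1 else q ^ 2 := by
    split_ifs with h
    · simp [h]
    · rw [SimpleGraph.completeBipartiteGraph_dist_inl_inl h]
  simp only [expDistMatrix, mulVec, dotProduct, of_apply, Fintype.sum_sum_type, hdist,
    Fintype.sum_ite_eq_mul, SimpleGraph.completeBipartiteGraph_dist_inl_inr, pow_one, ← mul_sum]

lemma expDistMatrix_completeBipartiteGraph_mulVec_inr [DecidableEq W] [Nonempty V] (q : ℝ)
    (x : V ⊕ W → ℝ) (i : W) :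
    (expDistMatrix (completeBipartiteGraph V W) q *ᵥ x) (.inr i) =
      (1 - q ^ 2) * x (.inr i) + q * ∑ j, x (.inl j) + q ^ 2 * ∑ j, x (.inr j) := by
  have hdist (j : W) : q ^ (completeBipartiteGraph V W).dist (.inr i) (.inr j) =
      if i = j then 1 else q ^ 2 := by
    split_ifs with h
    · simp [h]
    · rw [SimpleGraph.completeBipartiteGraph_dist_inr_inr h]
  simp only [expDistMatrix, mulVec, dotProduct, of_apply, Fintype.sum_sum_type, hdist,
    Fintype.sum_ite_eq_mul, SimpleGraph.completeBipartiteGraph_dist_inr_inl, pow_one, ← mul_sum]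
  ring

lemma isUnit_expDistMatrix_completeBipartiteGraph [DecidableEq V] [DecidableEq W]
    [Nonempty V] [Nonempty W] {q : ℝ} (hq : q ^ 2 ≠ 1)
    (hVW : q ^ 2 * ((Fintype.card V : ℝ) - 1) * ((Fintype.card W : ℝ) - 1) ≠ 1) :
    IsUnit (expDistMatrix (completeBipartiteGraph V W) q) := by
  rw [isUnit_iff_isUnit_det, isUnit_iff_ne_zero, Ne, ← exists_mulVec_eq_zero_iff]
  rintro ⟨x, hx0, hx⟩
  set a := ∑ j, x (.inl j)
  set b := ∑ j, x (.inr j)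
  have hl (i : V) : (1 - q ^ 2) * x (.inl i) + q ^ 2 * a + q * b = 0 :=
    (expDistMatrix_completeBipartiteGraph_mulVec_inl q x i).symm.trans (congrFun hx (.inl i))
  have hr (i : W) : (1 - q ^ 2) * x (.inr i) + q * a + q ^ 2 * b = 0 :=
    (expDistMatrix_completeBipartiteGraph_mulVec_inr q x i).symm.trans (congrFun hx (.inr i))
  have hl_sum : (1 - q ^ 2 + Fintype.card V * q ^ 2) * a + Fintype.card V * q * b = 0 := by
    have := Finset.sum_eq_zero (s := univ) fun i _ => hl i
    simp only [sum_add_distrib, ← mul_sum, sum_const, card_univ, nsmul_eq_mul] at this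
    linear_combination this
  have hr_sum : Fintype.card W * q * a + (1 - q ^ 2 + Fintype.card W * q ^ 2) * b = 0 := by
    have := Finset.sum_eq_zero (s := univ) fun i _ => hr i
    simp only [sum_add_distrib, ← mul_sum, sum_const, card_univ, nsmul_eq_mul] at this
    linear_combination this
  -- the determinant of this 2 × 2 system factors as `(1 - q²)(1 - q²(|V| - 1)(|W| - 1))`
  have hdet : (1 - q ^ 2) * (1 - q ^ 2 * ((Fintype.card V : ℝ) - 1) * ((Fintype.card W : ℝ) - 1))
      ≠ 0 := mul_ne_zero (sub_ne_zero.mpr hq.symm) (sub_ne_zero.mpr hVW.symm)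
  have ha : a = 0 := by
    refine (mul_eq_zero.mp ?_).resolve_left hdet
    linear_combination (1 - q ^ 2 + Fintype.card W * q ^ 2) * hl_sum - Fintype.card V * q * hr_sum
  have hb : b = 0 := by
    refine (mul_eq_zero.mp ?_).resolve_left hdet
    linear_combination (1 - q ^ 2 + Fintype.card V * q ^ 2) * hr_sum - Fintype.card W * q * hl_sum
  refine hx0 (funext fun u => ?_)
  have h1 : 1 - q ^ 2 ≠ 0 := sub_ne_zero.mpr hq.symm
  cases u with
  | inl i =>
    exact (mul_eq_zero.mp (by linear_combination hl i - q ^ 2 * ha - q * hb)).resolve_left h1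
  | inr i =>
    exact (mul_eq_zero.mp (by linear_combination hr i - q * ha - q ^ 2 * hb)).resolve_left h1

-- Cramer's rule for the side-sum system, after cancelling a common factor `1 - q`.
lemma expDistMatrix_completeBipartiteGraph_mulVec_eq_one [DecidableEq V] [DecidableEq W]
    [Nonempty V] [Nonempty W] {q : ℝ} (hq : q ≠ -1)
    (hVW : q ^ 2 * ((Fintype.card V : ℝ) - 1) * ((Fintype.card W : ℝ) - 1) ≠ 1) :
    expDistMatrix (completeBipartiteGraph V W) q *ᵥ
      Sum.elim
        (fun _ => (1 - (Fintype.card W - 1) * q) /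
          ((1 + q) * (1 - q ^ 2 * (Fintype.card V - 1) * (Fintype.card W - 1))))
        (fun _ => (1 - (Fintype.card V - 1) * q) /
          ((1 + q) * (1 - q ^ 2 * (Fintype.card V - 1) * (Fintype.card W - 1)))) = 1 := by
  have h1 : 1 + q ≠ 0 := fun h => hq (by linear_combination h)
  have h2 : 1 - q ^ 2 * ((Fintype.card V : ℝ) - 1) * (Fintype.card W - 1) ≠ 0 :=
    sub_ne_zero.mpr hVW.symm
  have hD := mul_inv_cancel₀ (mul_ne_zero h1 h2)
  ext (i | i)
  · rw [expDistMatrix_completeBipartiteGraph_mulVec_inl]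
    simp only [Sum.elim_inl, Sum.elim_inr, sum_const, card_univ, nsmul_eq_mul, Pi.one_apply,
      div_eq_mul_inv]
    linear_combination hD
  · rw [expDistMatrix_completeBipartiteGraph_mulVec_inr]
    simp only [Sum.elim_inl, Sum.elim_inr, sum_const, card_univ, nsmul_eq_mul, Pi.one_apply,
      div_eq_mul_inv]
    linear_combination hD

end CompleteBipartite

theorem entrySum_inv_expDistMatrix_completeBipartite_general (s t : ℕ) (hs : 0 < s) (ht : 0 < t)
    (q : ℝ) (hq1 : q ≠ 1) (hq1' : q ≠ -1)
    (hq2 : q ^ 2 * ((s : ℝ) - 1) * ((t : ℝ) - 1) ≠ 1) :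
    ∑ i, ∑ j, (expDistMatrix (completeBipartiteGraph (Fin s) (Fin t)) q)⁻¹ i j
      = (2 * q * (q - 1) * s * t - ((s : ℝ) + t) * (q ^ 2 - 1))
        / ((q ^ 2 - 1) * (q ^ 2 * ((s : ℝ) - 1) * ((t : ℝ) - 1) - 1)) := by
  have : Nonempty (Fin s) := Fin.pos_iff_nonempty.mp hs
  have : Nonempty (Fin t) := Fin.pos_iff_nonempty.mp ht
  have hq : q ^ 2 ≠ 1 := by simp [hq1, hq1']
  have hst : q ^ 2 * ((Fintype.card (Fin s) : ℝ) - 1) * ((Fintype.card (Fin t) : ℝ) - 1) ≠ 1 := by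
    simpa using hq2
  rw [Matrix.sum_inv_apply_eq_sum_of_mulVec_eq_one
    (isUnit_expDistMatrix_completeBipartiteGraph hq hst)
    (expDistMatrix_completeBipartiteGraph_mulVec_eq_one hq1' hst)]
  have h1 : q ^ 2 - 1 ≠ 0 := sub_ne_zero.mpr hq
  have h2 : (1 + q) * (1 - q ^ 2 * ((s : ℝ) - 1) * ((t : ℝ) - 1)) ≠ 0 :=
    mul_ne_zero (fun h => hq1' (by linear_combination h)) (sub_ne_zero.mpr hq2.symm)
  have h3 : q ^ 2 * ((s : ℝ) - 1) * ((t : ℝ) - 1) - 1 ≠ 0 := sub_ne_zero.mpr hq2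
  simp only [Fintype.sum_sum_type, Sum.elim_inl, Sum.elim_inr, sum_const, card_univ,
    Fintype.card_fin, nsmul_eq_mul, mul_div_assoc', ← add_div]
  rw [div_eq_div_iff h2 (mul_ne_zero h1 h3)]
  ring

/-- The sum of all entries of the inverse of the exponential distance matrix of
`K_{s,t}` equals `(2q(q-1)st - (s+t)(q²-1)) / ((q²-1)(q²(s-1)(t-1)-1))`. -/
theorem entrySum_inv_expDistMatrix_completeBipartite (s t : ℕ) (hs : 0 < s) (ht : 0 < t)
    (q : ℝ) (hq0 : q ≠ 0) (hq1 : q ≠ 1) (hq1' : q ≠ -1)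
    (hq2 : q ^ 2 * ((s : ℝ) - 1) * ((t : ℝ) - 1) ≠ 1) :
    ∑ i, ∑ j, (expDistMatrix (completeBipartiteGraph (Fin s) (Fin t)) q)⁻¹ i j
      = (2 * q * (q - 1) * s * t - ((s : ℝ) + t) * (q ^ 2 - 1))
        / ((q ^ 2 - 1) * (q ^ 2 * ((s : ℝ) - 1) * ((t : ℝ) - 1) - 1)) :=
  entrySum_inv_expDistMatrix_completeBipartite_general s t hs ht q hq1 hq1' hq2
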